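/- For a linear endomorphism f of a finite-dimensional inner product space with components f^{ij} = ⟨e^i, f(e^j)⟩ in a basis, the multivector 𝐟 = Σ_i e^i f(e_i) (geometric product) is independent of the choice of basis, and equals tr(f) + rot(f), where tr(f) = Σ_i ⟨e^i, f(e_i)⟩ and rot(f) = Σ_i e^i ∧ f(e_i). -/

import Mathlib

/-!
`Σ e'ᵢ ⊗ eᵢ` is the identity tensor of the bilinear form, so `Σ B (e'ᵢ) (eᵢ)` is frame
independent for every bilinear `B`, in particular for `B a b = a f(b)`. The split
`ab = ½(ab + ba) + ½(ab - ba)` with `ab + ba = polar Q a b` gives the trace and rotation parts.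
-/

open CliffordAlgebra

theorem ι_mul_ι_eq_algebraMap_half_polar_add_half_smul_sub
    {K V : Type*} [Field K] [NeZero (2 : K)] [AddCommGroup V] [Module K V]
    {Q : QuadraticForm K V} (a b : V) :
    ι Q a * ι Q b = algebraMap K (CliffordAlgebra Q) (QuadraticMap.polar Q a b / 2)
      + (1/2 : K) • (ι Q a * ι Q b - ι Q b * ι Q a) := by
  rw [div_eq_mul_one_div, mul_comm, map_mul, ← ι_mul_ι_add_swap, Algebra.algebraMap_eq_smul_one,
    smul_mul_assoc, one_mul, ← smul_add, add_add_sub_cancel, ← two_smul K, smul_smul,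
    one_div_mul_cancel two_ne_zero, one_smul]

theorem sum_apply_dual_frame_eq {R V M ι κ : Type*} [CommSemiring R] [AddCommMonoid V]
    [Module R V] [AddCommMonoid M] [Module R M] [Fintype ι] [Fintype κ]
    (B : V →ₗ[R] V →ₗ[R] M) (g : V → V → R) (hg : ∀ a b, g a b = g b a)
    (e e' : ι → V) (E E' : κ → V)
    (he : ∀ v, v = ∑ i, g v (e' i) • e i) (hE : ∀ v, v = ∑ j, g v (E j) • E' j) :
    ∑ i, B (e' i) (e i) = ∑ j, B (E' j) (E j) := by
  calc ∑ i, B (e' i) (e i)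
      = ∑ i, ∑ j, g (e' i) (E j) • B (E' j) (e i) := by
        refine Finset.sum_congr rfl fun i _ => ?_
        conv_lhs => rw [hE (e' i)]
        simp only [map_sum, map_smul, LinearMap.sum_apply, LinearMap.smul_apply]
    _ = ∑ j, B (E' j) (∑ i, g (E j) (e' i) • e i) := by
        rw [Finset.sum_comm]
        simp only [map_sum, map_smul, hg]
    _ = ∑ j, B (E' j) (E j) := by simp only [← he]

theorem multivector_of_endomorphism_eq_trace_add_rot_general
    {V : Type*} [AddCommGroup V] [Module ℝ V] {Q : QuadraticForm ℝ V}
    {ιI κ : Type*} [Fintype ιI] [Fintype κ]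
    (g : V → V → ℝ)
    (hg : ∀ a b, g a b = QuadraticMap.polar (⇑Q) a b / 2)
    (f : V →ₗ[ℝ] V)
    (e e' : ιI → V) (E E' : κ → V)
    (hspan : ∀ v : V, v = ∑ i, g v (e' i) • e i)
    (hSpan' : ∀ v : V, v = ∑ i, g v (E i) • E' i) :
    (∑ i, ι Q (e' i) * ι Q (f (e i)) = ∑ j, ι Q (E' j) * ι Q (f (E j)))
    ∧ (∑ i, ι Q (e' i) * ι Q (f (e i))
        = algebraMap ℝ (CliffordAlgebra Q) (∑ i, g (e' i) (f (e i)))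
          + ∑ i, (1/2 : ℝ) • (ι Q (e' i) * ι Q (f (e i)) - ι Q (f (e i)) * ι Q (e' i))) := by
  have g_comm : ∀ a b, g a b = g b a := fun a b => by rw [hg, hg, QuadraticMap.polar_comm]
  refine ⟨sum_apply_dual_frame_eq ((LinearMap.mul ℝ _).compl₁₂ (ι Q) ((ι Q).comp f))
    g g_comm e e' E E' hspan hSpan', ?_⟩
  simp only [hg, map_sum, ← Finset.sum_add_distrib,
    ← ι_mul_ι_eq_algebraMap_half_polar_add_half_smul_sub]

/-- For a linear endomorphism `f` of a space with nondegenerate symmetric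
bilinear form `g` (with `g(a,b) = ½ polar Q a b`, so `ab = g(a,b) + a∧b` in the
Clifford algebra), the multivector `𝐟 = Σ_i e^i f(e_i)` (geometric product) is
independent of the choice of frame, and equals `tr(f) + rot(f)` with
`tr(f) = Σ_i g(e^i, f(e_i))` and `rot(f) = Σ_i e^i ∧ f(e_i)`. -/
theorem multivector_of_endomorphism_eq_trace_add_rot
    {V : Type*} [AddCommGroup V] [Module ℝ V] {Q : QuadraticForm ℝ V}
    {ιI κ : Type*} [Fintype ιI] [Fintype κ] [DecidableEq ιI] [DecidableEq κ]
    (g : V → V → ℝ)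
    (hg : ∀ a b, g a b = QuadraticMap.polar (⇑Q) a b / 2)
    (f : V →ₗ[ℝ] V)
    (e e' : ιI → V) (E E' : κ → V)
    (hrecip : ∀ i j, g (e' i) (e j) = if i = j then (1 : ℝ) else 0)
    (hRecip : ∀ i j, g (E' i) (E j) = if i = j then (1 : ℝ) else 0)
    (hspan : ∀ v : V, v = ∑ i, g v (e' i) • e i)
    (hspan' : ∀ v : V, v = ∑ i, g v (e i) • e' i)
    (hSpan : ∀ v : V, v = ∑ i, g v (E' i) • E i)
    (hSpan' : ∀ v : V, v = ∑ i, g v (E i) • E' i) :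
    (∑ i, ι Q (e' i) * ι Q (f (e i)) = ∑ j, ι Q (E' j) * ι Q (f (E j)))
    ∧ (∑ i, ι Q (e' i) * ι Q (f (e i))
        = algebraMap ℝ (CliffordAlgebra Q) (∑ i, g (e' i) (f (e i)))
          + ∑ i, (1/2 : ℝ) • (ι Q (e' i) * ι Q (f (e i)) - ι Q (f (e i)) * ι Q (e' i))) :=
  multivector_of_endomorphism_eq_trace_add_rot_general g hg f e e' E E' hspan hSpan'
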